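/- arXiv:2301.03294 — 5 statements merged into one kernel-verified Lean document; each statement's English description precedes it below -/
import Mathlib

section
/- Let u, v be complex sequences of length γ, and let U = (u, ε_0 u, ε_1 u, …) and V = (v, δ_0 v, δ_1 v, …) be concatenations of R unimodular scalar multiples of u and v respectively (scalars ε_r, δ_r ∈ ℂ with |ε_r| = |δ_r| = 1, ε_0 = δ_0 = 1). Then for 0 < τ < γ, Θ(U,V)(τ) = Θ(u,v)(τ)·(∑_{r=0}^{R−1} ε_r δ_r*) + Θ(u,v)(τ−γ)·(∑_{r=0}^{R−2} ε_r δ_{r+1}*). -/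
open Complex BigOperators Finset

/-- Aperiodic cross-correlation sum of two length-`L` complex sequences. -/
noncomputable def accs (L : ℕ) (u v : ℕ → ℂ) (τ : ℤ) : ℂ :=
  if 0 ≤ τ ∧ τ < (L : ℤ) then
    ∑ k ∈ Finset.range (L - τ.toNat), u k * (starRingEnd ℂ) (v (k + τ.toNat))
  else if -(L : ℤ) < τ ∧ τ < 0 then
    ∑ k ∈ Finset.range (L - (-τ).toNat), u (k + (-τ).toNat) * (starRingEnd ℂ) (v k)
  else 0

lemma aux_sum_range_mul {M : Type*} [AddCommMonoid M] (f : ℕ → M) (n c : ℕ) :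
    ∑ k ∈ Finset.range (n * c), f k
      = ∑ r ∈ Finset.range n, ∑ j ∈ Finset.range c, f (c * r + j) := by
  induction n with
  | zero => simp
  | succ n ih =>
      rw [Nat.succ_mul, Finset.sum_range_add, ih, Finset.sum_range_succ]
      congr 1
      exact Finset.sum_congr rfl fun j _ => by rw [Nat.mul_comm]

theorem stmt_3 (γ R : ℕ) (hγ : 0 < γ) (hR : 0 < R) (u v : ℕ → ℂ)
    (ε δ : ℕ → ℂ) (hε : ∀ r < R, ‖ε r‖ = 1) (hδ : ∀ r < R, ‖δ r‖ = 1)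
    (hε0 : ε 0 = 1) (hδ0 : δ 0 = 1)
    (U V : ℕ → ℂ)
    (hU : ∀ t, U t = ε (t / γ) * u (t % γ))
    (hV : ∀ t, V t = δ (t / γ) * v (t % γ))
    (τ : ℤ) (h1 : 0 < τ) (h2 : τ < (γ : ℤ)) :
    accs (R * γ) U V τ =
      accs γ u v τ * (∑ r ∈ Finset.range R, ε r * (starRingEnd ℂ) (δ r)) +
        accs γ u v (τ - γ) *
          (∑ r ∈ Finset.range (R - 1), ε r * (starRingEnd ℂ) (δ (r + 1))) := by
  obtain ⟨S, rfl⟩ : ∃ S, R = S + 1 := ⟨R - 1, by omega⟩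
  set t := τ.toNat with htdef
  have htτ : (t : ℤ) = τ := Int.toNat_of_nonneg h1.le
  have ht1 : 0 < t := by omega
  have ht2 : t < γ := by omega
  set A := ∑ j ∈ Finset.range (γ - t), u j * (starRingEnd ℂ) (v (j + t)) with hA
  set B := ∑ i ∈ Finset.range t, u (i + (γ - t)) * (starRingEnd ℂ) (v i) with hB
  -- RHS pieces
  have hRHS1 : accs γ u v τ = A := by
    rw [accs, if_pos ⟨h1.le, h2⟩]
  have hneg : (-(τ - γ)).toNat = γ - t := by omega
  have hRHS2 : accs γ u v (τ - γ) = B := by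
    rw [accs, if_neg (by omega), if_pos (by constructor <;> omega), hneg]
    have : γ - (γ - t) = t := by omega
    rw [this]
  -- LHS
  have hmul : γ ≤ (S + 1) * γ := Nat.le_mul_of_pos_left γ (by omega)
  have hLcond : 0 ≤ τ ∧ τ < ((S + 1) * γ : ℕ) := by
    refine ⟨h1.le, ?_⟩
    have : ((γ : ℕ) : ℤ) ≤ (((S + 1) * γ : ℕ) : ℤ) := by exact_mod_cast hmul
    omega
  have hsplitlen : (S + 1) * γ - t = S * γ + (γ - t) := by
    have h : (S + 1) * γ = S * γ + γ := by ring
    omega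
  -- evaluation lemmas
  have hdiv : ∀ r j, j < γ → (γ * r + j) / γ = r := by
    intro r j hj
    rw [Nat.mul_add_div hγ, Nat.div_eq_of_lt hj, Nat.add_zero]
  have hmod : ∀ r j, j < γ → (γ * r + j) % γ = j := by
    intro r j hj
    rw [Nat.mul_add_mod, Nat.mod_eq_of_lt hj]
  have hf1 : ∀ r j, j < γ - t →
      U (γ * r + j) * (starRingEnd ℂ) (V (γ * r + j + t))
        = (ε r * (starRingEnd ℂ) (δ r)) * (u j * (starRingEnd ℂ) (v (j + t))) := by
    intro r j hj
    rw [hU, hV, add_assoc, hdiv r j (by omega), hmod r j (by omega),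
      hdiv r (j + t) (by omega), hmod r (j + t) (by omega), map_mul]
    ring
  have hf2 : ∀ r i, i < t →
      U (γ * r + (γ - t + i)) * (starRingEnd ℂ) (V (γ * r + (γ - t + i) + t))
        = (ε r * (starRingEnd ℂ) (δ (r + 1))) * (u (i + (γ - t)) * (starRingEnd ℂ) (v i)) := by
    intro r i hi
    have h1' : γ * r + (γ - t + i) + t = γ * (r + 1) + i := by
      have : γ * (r + 1) = γ * r + γ := by ring
      omega
    have h2' : γ - t + i = i + (γ - t) := by omega
    rw [hU, hV, h1', hdiv r _ (by omega), hmod r _ (by omega),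
      hdiv (r + 1) i (by omega), hmod (r + 1) i (by omega), h2', map_mul]
    ring
  have hblock : ∀ r, ∑ j ∈ Finset.range γ, U (γ * r + j) * (starRingEnd ℂ) (V (γ * r + j + t))
      = (ε r * (starRingEnd ℂ) (δ r)) * A + (ε r * (starRingEnd ℂ) (δ (r + 1))) * B := by
    intro r
    have hγsplit : γ = (γ - t) + t := by omega
    rw [hγsplit, Finset.sum_range_add, ← hγsplit]
    congr 1
    · rw [hA, Finset.mul_sum]
      exact Finset.sum_congr rfl fun j hj => hf1 r j (Finset.mem_range.mp hj)
    · rw [hB, Finset.mul_sum]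
      exact Finset.sum_congr rfl fun i hi => hf2 r i (Finset.mem_range.mp hi)
  rw [accs, if_pos hLcond, hRHS1, hRHS2, ← htdef, hsplitlen, Finset.sum_range_add,
    aux_sum_range_mul]
  have hlast : ∑ j ∈ Finset.range (γ - t), U (S * γ + j) * (starRingEnd ℂ) (V (S * γ + j + t))
      = (ε S * (starRingEnd ℂ) (δ S)) * A := by
    rw [hA, Finset.mul_sum]
    refine Finset.sum_congr rfl fun j hj => ?_
    have := hf1 S j (Finset.mem_range.mp hj)
    rwa [Nat.mul_comm γ S] at this
  rw [hlast]
  simp only [hblock]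
  rw [Finset.sum_add_distrib, Nat.add_sub_cancel, Finset.sum_range_succ]
  simp only [← Finset.sum_mul]
  ring
end

section
/- Let u, v be unimodular complex sequences of length γ such that the pair of singleton sets {u}, {v} satisfies Θ(u,u)(τ) + Θ(v,v)(τ) = 0 for 0 < |τ| < γ (a Golay-type complementarity within a larger CCC). Define U = (u, u, −u) and V = (v, v, −v), each of length 3γ. Then Θ(U,U)(τ) + Θ(V,V)(τ) = 0 for all γ ≤ |τ| < 2γ. -/
open Complex BigOperators Finset

lemma accs_pos_eq (L : ℕ) (u v : ℕ → ℂ) (n : ℕ) (hn : n < L) :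
    accs L u v (n : ℤ) = ∑ k ∈ Finset.range (L - n), u k * (starRingEnd ℂ) (v (k + n)) := by
  unfold accs
  rw [if_pos (by omega)]
  simp

lemma accs_neg_eq (L : ℕ) (u v : ℕ → ℂ) (n : ℕ) (h0 : 0 < n) (hn : n < L) :
    accs L u v (-(n : ℤ)) = ∑ k ∈ Finset.range (L - n), u (k + n) * (starRingEnd ℂ) (v k) := by
  unfold accs
  rw [if_neg (by omega), if_pos (by omega)]
  simp

lemma accs_conj (L : ℕ) (u v : ℕ → ℂ) (τ : ℤ) :
    accs L u v (-τ) = (starRingEnd ℂ) (accs L v u τ) := by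
  rcases lt_trichotomy τ 0 with h | rfl | h
  · by_cases hL : -τ < (L : ℤ)
    · unfold accs
      rw [if_pos (by omega), if_neg (by omega), if_pos (by omega)]
      simp only [map_sum, map_mul, Complex.conj_conj]
      exact Finset.sum_congr rfl fun k _ => mul_comm _ _
    · unfold accs
      rw [if_neg (by omega), if_neg (by omega), if_neg (by omega), if_neg (by omega)]
      simp
  · unfold accs
    rw [neg_zero]
    split_ifs with h h2
    · simp only [map_sum, map_mul, Complex.conj_conj]
      exact Finset.sum_congr rfl fun k _ => mul_comm _ _
    · omega
    · simp
  · by_cases hL : τ < (L : ℤ)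
    · unfold accs
      rw [if_neg (by omega), if_pos (by omega), if_pos (by omega)]
      simp only [map_sum, map_mul, Complex.conj_conj, neg_neg]
      exact Finset.sum_congr rfl fun k _ => mul_comm _ _
    · unfold accs
      rw [if_neg (by omega), if_neg (by omega), if_neg (by omega), if_neg (by omega)]
      simp

lemma divmod (γ a m : ℕ) (h1 : a*γ ≤ m) (h2 : m < (a+1)*γ) : m / γ = a ∧ m % γ = m - a*γ := by
  have hd : m / γ = a := Nat.div_eq_of_lt_le h1 h2
  refine ⟨hd, ?_⟩
  have hm := Nat.mod_add_div m γ
  rw [hd, Nat.mul_comm] at hm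
  omega

lemma accs_neg_len (γ : ℕ) (hγ : 0 < γ) (u : ℕ → ℂ) : accs γ u u (-(γ:ℤ)) = 0 := by
  unfold accs
  rw [if_neg (by omega), if_neg (by omega)]

lemma key (γ : ℕ) (hγ : 0 < γ) (u U : ℕ → ℂ)
    (hU : ∀ t, U t = (if t / γ = 2 then -1 else 1) * u (t % γ))
    (s : ℕ) (hs : s < γ) :
    accs (3*γ) U U ((γ + s : ℕ) : ℤ) = - accs γ u u ((s : ℤ) - (γ:ℤ)) := by
  rw [accs_pos_eq _ _ _ _ (by omega)]
  have hsplit : 3*γ - (γ+s) = (γ - s) + (s + (γ - s)) := by omega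
  rw [hsplit, Finset.sum_range_add, Finset.sum_range_add]
  have S1 : ∑ k ∈ Finset.range (γ - s), U k * (starRingEnd ℂ) (U (k + (γ + s)))
      = ∑ k ∈ Finset.range (γ - s), u k * (starRingEnd ℂ) (u (k + s)) := by
    apply Finset.sum_congr rfl
    intro k hk
    rw [Finset.mem_range] at hk
    obtain ⟨d1, m1'⟩ := divmod γ 0 k (by omega) (by omega)
    obtain ⟨d2, m2'⟩ := divmod γ 1 (k + (γ + s)) (by omega) (by omega)
    have m1 : k % γ = k := by omega
    have m2 : (k + (γ + s)) % γ = k + s := by omega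
    rw [hU k, hU (k + (γ + s)), d1, d2, m1, m2]
    norm_num
  have S3 : ∑ k ∈ Finset.range (γ - s), U ((γ - s) + (s + k)) *
        (starRingEnd ℂ) (U ((γ - s) + (s + k) + (γ + s)))
      = - ∑ k ∈ Finset.range (γ - s), u k * (starRingEnd ℂ) (u (k + s)) := by
    rw [← Finset.sum_neg_distrib]
    apply Finset.sum_congr rfl
    intro k hk
    rw [Finset.mem_range] at hk
    obtain ⟨d1, m1'⟩ := divmod γ 1 ((γ - s) + (s + k)) (by omega) (by omega)
    obtain ⟨d2, m2'⟩ := divmod γ 2 ((γ - s) + (s + k) + (γ + s)) (by omega) (by omega)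
    have m1 : ((γ - s) + (s + k)) % γ = k := by omega
    have m2 : ((γ - s) + (s + k) + (γ + s)) % γ = k + s := by omega
    rw [hU ((γ - s) + (s + k)), hU ((γ - s) + (s + k) + (γ + s)), d1, d2, m1, m2]
    simp only [map_mul, map_neg, map_one]
    norm_num
  have S2 : ∑ k ∈ Finset.range s, U ((γ - s) + k) * (starRingEnd ℂ) (U ((γ - s) + k + (γ + s)))
      = - ∑ k ∈ Finset.range s, u (k + (γ - s)) * (starRingEnd ℂ) (u k) := by
    rw [← Finset.sum_neg_distrib]
    apply Finset.sum_congr rfl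
    intro k hk
    rw [Finset.mem_range] at hk
    obtain ⟨d1, m1'⟩ := divmod γ 0 ((γ - s) + k) (by omega) (by omega)
    obtain ⟨d2, m2'⟩ := divmod γ 2 ((γ - s) + k + (γ + s)) (by omega) (by omega)
    have m1 : ((γ - s) + k) % γ = k + (γ - s) := by omega
    have m2 : ((γ - s) + k + (γ + s)) % γ = k := by omega
    rw [hU ((γ - s) + k), hU ((γ - s) + k + (γ + s)), d1, d2, m1, m2]
    simp only [map_mul, map_neg, map_one]
    norm_num
  rw [S1, S2, S3]
  rcases Nat.eq_zero_or_pos s with rfl | hspos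
  · have h0 : ((0:ℕ) : ℤ) - (γ:ℤ) = -(γ:ℤ) := by omega
    rw [h0, accs_neg_len γ hγ u]
    simp
  · have h0 : (s : ℤ) - (γ:ℤ) = -(((γ - s : ℕ)) : ℤ) := by omega
    rw [h0, accs_neg_eq γ u u (γ - s) (by omega) (by omega)]
    have hss : γ - (γ - s) = s := by omega
    rw [hss]
    ring

theorem stmt_6 (γ : ℕ) (hγ : 0 < γ) (u v : ℕ → ℂ)
    (hu : ∀ t < γ, ‖u t‖ = 1) (hv : ∀ t < γ, ‖v t‖ = 1)
    (hcomp : ∀ τ : ℤ, 0 < |τ| → |τ| < (γ : ℤ) →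
      accs γ u u τ + accs γ v v τ = 0)
    (U V : ℕ → ℂ)
    (hU : ∀ t, U t = (if t / γ = 2 then -1 else 1) * u (t % γ))
    (hV : ∀ t, V t = (if t / γ = 2 then -1 else 1) * v (t % γ))
    (τ : ℤ) (h1 : (γ : ℤ) ≤ |τ|) (h2 : |τ| < 2 * γ) :
    accs (3 * γ) U U τ + accs (3 * γ) V V τ = 0 := by
  have main : ∀ σ : ℤ, 0 ≤ σ → (γ : ℤ) ≤ σ → σ < 2 * γ →
      accs (3 * γ) U U σ + accs (3 * γ) V V σ = 0 := by
    intro σ hσ0 hσ1 hσ2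
    obtain ⟨s, hs, rfl⟩ : ∃ s : ℕ, s < γ ∧ σ = ((γ + s : ℕ) : ℤ) :=
      ⟨(σ - γ).toNat, by omega, by omega⟩
    rw [key γ hγ u U hU s hs, key γ hγ v V hV s hs]
    rcases Nat.eq_zero_or_pos s with rfl | hspos
    · have h0 : ((0:ℕ) : ℤ) - (γ:ℤ) = -(γ:ℤ) := by omega
      rw [h0, accs_neg_len γ hγ u, accs_neg_len γ hγ v]
      ring
    · have := hcomp ((s : ℤ) - γ)
        (by rw [abs_of_nonpos (by omega)]; omega)
        (by rw [abs_of_nonpos (by omega)]; omega)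
      linear_combination -this
  rcases le_or_gt 0 τ with hτ | hτ
  · exact main τ hτ (by rwa [abs_of_nonneg hτ] at h1) (by rwa [abs_of_nonneg hτ] at h2)
  · have hm := main (-τ) (by omega) (by rwa [abs_of_neg hτ] at h1) (by rwa [abs_of_neg hτ] at h2)
    have e1 : accs (3*γ) U U τ = (starRingEnd ℂ) (accs (3*γ) U U (-τ)) := by
      rw [← accs_conj, neg_neg]
    have e2 : accs (3*γ) V V τ = (starRingEnd ℂ) (accs (3*γ) V V (-τ)) := by
      rw [← accs_conj, neg_neg]
    rw [e1, e2, ← map_add, hm, map_zero]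
end

section
/- Let A = {a_n : 0 ≤ n < M} and B = {b_n : 0 ≤ n < M} be sets of unimodular sequences of length γ with ∑_n Θ(a_n, b_n)(τ) = 0 for all |τ| < γ. Fix scalars ε, δ on the unit circle and form A' = {(a_n, ε a_n) : n} and B' = {(b_n, δ b_n) : n}, sequences of length 2γ. Then ∑_n Θ(a'_n, b'_n)(τ) = 0 for all |τ| < γ, where a'_n = (a_n, ε a_n) and b'_n = (b_n, δ b_n). -/
open Complex BigOperators Finset

private lemma sum_range_split (f : ℕ → ℂ) (m n : ℕ) :
    ∑ k ∈ Finset.range (m + n), f k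
      = ∑ k ∈ Finset.range m, f k + ∑ k ∈ Finset.range n, f (m + k) := by
  rw [← Finset.sum_range_add_sum_Ico f (Nat.le_add_right m n),
    Finset.sum_Ico_eq_sum_range]
  simp

private lemma split3 (γ t : ℕ) (ht : t ≤ γ) (f : ℕ → ℂ) :
    ∑ k ∈ Finset.range (2 * γ - t), f k
      = ∑ k ∈ Finset.range (γ - t), f k + ∑ k ∈ Finset.range t, f (γ - t + k)
        + ∑ k ∈ Finset.range (γ - t), f (γ + k) := by
  have h : 2 * γ - t = (γ - t) + (t + (γ - t)) := by omega
  have h3 : ∑ k ∈ Finset.range (γ - t), f (γ - t + (t + k))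
      = ∑ k ∈ Finset.range (γ - t), f (γ + k) :=
    Finset.sum_congr rfl (fun k hk => by congr 1; omega)
  rw [h, sum_range_split, sum_range_split, h3, ← add_assoc]

section decomp

variable (γ : ℕ) (hγ : 0 < γ) (ε δ : ℂ) (a b a' b' : ℕ → ℂ)
  (ha' : ∀ t, a' t = (if t / γ = 1 then ε else 1) * a (t % γ))
  (hb' : ∀ t, b' t = (if t / γ = 1 then δ else 1) * b (t % γ))

include hγ ha' hb'

private lemma pos_decomp (t : ℕ) (ht : t < γ) :
    accs (2 * γ) a' b' (t : ℤ)
      = (1 + ε * (starRingEnd ℂ) δ) * accs γ a b (t : ℤ)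
        + (starRingEnd ℂ) δ * accs γ a b ((t : ℤ) - γ) := by
  have hL : accs (2 * γ) a' b' (t : ℤ)
      = ∑ k ∈ Finset.range (2 * γ - t), a' k * (starRingEnd ℂ) (b' (k + t)) := by
    rw [accs, if_pos ⟨Int.natCast_nonneg t, by exact_mod_cast (by omega : t < 2 * γ)⟩]
    simp
  have hR1 : accs γ a b (t : ℤ)
      = ∑ k ∈ Finset.range (γ - t), a k * (starRingEnd ℂ) (b (k + t)) := by
    rw [accs, if_pos ⟨Int.natCast_nonneg t, by exact_mod_cast ht⟩]
    simp
  have hR2 : accs γ a b ((t : ℤ) - γ)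
      = ∑ k ∈ Finset.range t, a (k + (γ - t)) * (starRingEnd ℂ) (b k) := by
    rcases Nat.eq_zero_or_pos t with h0 | h0
    · subst h0
      rw [accs, if_neg (by push_cast; omega), if_neg (by push_cast; omega)]
      simp
    · rw [accs, if_neg (by push_cast; omega), if_pos ⟨by push_cast; omega, by push_cast; omega⟩]
      have : (-((t : ℤ) - γ)).toNat = γ - t := by omega
      rw [this]
      have : γ - (γ - t) = t := by omega
      rw [this]
  rw [hL, hR1, hR2, split3 γ t (le_of_lt ht)]
  have e1 : ∀ k ∈ Finset.range (γ - t), a' k * (starRingEnd ℂ) (b' (k + t))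
      = a k * (starRingEnd ℂ) (b (k + t)) := by
    intro k hk
    simp only [Finset.mem_range] at hk
    rw [ha', hb', Nat.div_eq_of_lt (by omega), Nat.mod_eq_of_lt (by omega),
      Nat.div_eq_of_lt (by omega), Nat.mod_eq_of_lt (by omega)]
    simp
  have e2 : ∀ k ∈ Finset.range t,
      a' (γ - t + k) * (starRingEnd ℂ) (b' (γ - t + k + t))
      = (starRingEnd ℂ) δ * (a (k + (γ - t)) * (starRingEnd ℂ) (b k)) := by
    intro k hk
    simp only [Finset.mem_range] at hk
    have h1 : γ - t + k + t = γ + k := by omega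
    rw [ha', hb', h1, Nat.div_eq_of_lt (by omega), Nat.mod_eq_of_lt (by omega)]
    have h2 : (γ + k) / γ = 1 := by
      rw [Nat.add_div_left _ hγ, Nat.div_eq_of_lt (by omega)]
    have h3 : (γ + k) % γ = k := by
      rw [Nat.add_mod_left, Nat.mod_eq_of_lt (by omega)]
    rw [h2, h3]
    have h4 : γ - t + k = k + (γ - t) := by omega
    rw [h4]
    norm_num
    ring
  have e3 : ∀ k ∈ Finset.range (γ - t),
      a' (γ + k) * (starRingEnd ℂ) (b' (γ + k + t))
      = ε * (starRingEnd ℂ) δ * (a k * (starRingEnd ℂ) (b (k + t))) := by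
    intro k hk
    simp only [Finset.mem_range] at hk
    have h2 : (γ + k) / γ = 1 := by
      rw [Nat.add_div_left _ hγ, Nat.div_eq_of_lt (by omega)]
    have h3 : (γ + k) % γ = k := by
      rw [Nat.add_mod_left, Nat.mod_eq_of_lt (by omega)]
    have h1 : γ + k + t = γ + (k + t) := by omega
    have h2' : (γ + (k + t)) / γ = 1 := by
      rw [Nat.add_div_left _ hγ, Nat.div_eq_of_lt (by omega)]
    have h3' : (γ + (k + t)) % γ = k + t := by
      rw [Nat.add_mod_left, Nat.mod_eq_of_lt (by omega)]
    rw [ha', hb', h1, h2, h3, h2', h3']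
    norm_num
    ring
  rw [Finset.sum_congr rfl e1, Finset.sum_congr rfl e2, Finset.sum_congr rfl e3,
    ← Finset.mul_sum, ← Finset.mul_sum]
  ring

private lemma neg_decomp (t : ℕ) (ht0 : 0 < t) (ht : t < γ) :
    accs (2 * γ) a' b' (-(t : ℤ))
      = (1 + ε * (starRingEnd ℂ) δ) * accs γ a b (-(t : ℤ))
        + ε * accs γ a b ((γ : ℤ) - t) := by
  have hL : accs (2 * γ) a' b' (-(t : ℤ))
      = ∑ k ∈ Finset.range (2 * γ - t), a' (k + t) * (starRingEnd ℂ) (b' k) := by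
    rw [accs, if_neg (by push_cast; omega), if_pos ⟨by push_cast; omega, by push_cast; omega⟩]
    have : (-(-(t : ℤ))).toNat = t := by omega
    rw [this]
  have hR1 : accs γ a b (-(t : ℤ))
      = ∑ k ∈ Finset.range (γ - t), a (k + t) * (starRingEnd ℂ) (b k) := by
    rw [accs, if_neg (by push_cast; omega), if_pos ⟨by push_cast; omega, by push_cast; omega⟩]
    have : (-(-(t : ℤ))).toNat = t := by omega
    rw [this]
  have hR2 : accs γ a b ((γ : ℤ) - t)
      = ∑ k ∈ Finset.range t, a k * (starRingEnd ℂ) (b (k + (γ - t))) := by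
    rw [accs, if_pos ⟨by push_cast; omega, by push_cast; omega⟩]
    have h1 : ((γ : ℤ) - t).toNat = γ - t := by omega
    rw [h1]
    have h2 : γ - (γ - t) = t := by omega
    rw [h2]
  rw [hL, hR1, hR2, split3 γ t (le_of_lt ht)]
  have e1 : ∀ k ∈ Finset.range (γ - t), a' (k + t) * (starRingEnd ℂ) (b' k)
      = a (k + t) * (starRingEnd ℂ) (b k) := by
    intro k hk
    simp only [Finset.mem_range] at hk
    rw [ha', hb', Nat.div_eq_of_lt (by omega), Nat.mod_eq_of_lt (by omega),
      Nat.div_eq_of_lt (by omega), Nat.mod_eq_of_lt (by omega)]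
    simp
  have e2 : ∀ k ∈ Finset.range t,
      a' (γ - t + k + t) * (starRingEnd ℂ) (b' (γ - t + k))
      = ε * (a k * (starRingEnd ℂ) (b (k + (γ - t)))) := by
    intro k hk
    simp only [Finset.mem_range] at hk
    have h1 : γ - t + k + t = γ + k := by omega
    have h2 : (γ + k) / γ = 1 := by
      rw [Nat.add_div_left _ hγ, Nat.div_eq_of_lt (by omega)]
    have h3 : (γ + k) % γ = k := by
      rw [Nat.add_mod_left, Nat.mod_eq_of_lt (by omega)]
    rw [ha', hb', h1, h2, h3, Nat.div_eq_of_lt (by omega), Nat.mod_eq_of_lt (by omega)]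
    have h4 : γ - t + k = k + (γ - t) := by omega
    rw [h4]
    norm_num
    ring
  have e3 : ∀ k ∈ Finset.range (γ - t),
      a' (γ + k + t) * (starRingEnd ℂ) (b' (γ + k))
      = ε * (starRingEnd ℂ) δ * (a (k + t) * (starRingEnd ℂ) (b k)) := by
    intro k hk
    simp only [Finset.mem_range] at hk
    have h1 : γ + k + t = γ + (k + t) := by omega
    have h2 : (γ + (k + t)) / γ = 1 := by
      rw [Nat.add_div_left _ hγ, Nat.div_eq_of_lt (by omega)]
    have h3 : (γ + (k + t)) % γ = k + t := by
      rw [Nat.add_mod_left, Nat.mod_eq_of_lt (by omega)]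
    have h2' : (γ + k) / γ = 1 := by
      rw [Nat.add_div_left _ hγ, Nat.div_eq_of_lt (by omega)]
    have h3' : (γ + k) % γ = k := by
      rw [Nat.add_mod_left, Nat.mod_eq_of_lt (by omega)]
    rw [ha', hb', h1, h2, h3, h2', h3']
    norm_num
    ring
  rw [Finset.sum_congr rfl e1, Finset.sum_congr rfl e2, Finset.sum_congr rfl e3,
    ← Finset.mul_sum, ← Finset.mul_sum]
  ring

end decomp

theorem stmt_10 {I : Type*} [Fintype I] (γ : ℕ) (hγ : 0 < γ)
    (A B : I → ℕ → ℂ)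
    (hA : ∀ i t, t < γ → ‖A i t‖ = 1) (hB : ∀ i t, t < γ → ‖B i t‖ = 1)
    (hcomp : ∀ τ : ℤ, |τ| < (γ : ℤ) → ∑ i, accs γ (A i) (B i) τ = 0)
    (ε δ : ℂ) (hε : ‖ε‖ = 1) (hδ : ‖δ‖ = 1)
    (A' B' : I → ℕ → ℂ)
    (hA' : ∀ i t, A' i t = (if t / γ = 1 then ε else 1) * A i (t % γ))
    (hB' : ∀ i t, B' i t = (if t / γ = 1 then δ else 1) * B i (t % γ)) :
    ∀ τ : ℤ, |τ| < (γ : ℤ) → ∑ i, accs (2 * γ) (A' i) (B' i) τ = 0 := by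
  intro τ hτ
  obtain ⟨hl, hr⟩ := abs_lt.mp hτ
  rcases le_or_gt 0 τ with hpos | hneg
  · obtain ⟨t, hτt⟩ : ∃ t : ℕ, τ = (t : ℤ) := ⟨τ.toNat, by omega⟩
    have ht : t < γ := by omega
    have key : ∀ i, accs (2 * γ) (A' i) (B' i) τ
        = (1 + ε * (starRingEnd ℂ) δ) * accs γ (A i) (B i) (t : ℤ)
          + (starRingEnd ℂ) δ * accs γ (A i) (B i) ((t : ℤ) - γ) := by
      intro i
      rw [hτt]
      exact pos_decomp γ hγ ε δ (A i) (B i) (A' i) (B' i) (hA' i) (hB' i) t ht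
    rw [Finset.sum_congr rfl (fun i _ => key i), Finset.sum_add_distrib,
      ← Finset.mul_sum, ← Finset.mul_sum]
    have h1 : ∑ i, accs γ (A i) (B i) (t : ℤ) = 0 := by
      apply hcomp
      rw [abs_lt]
      constructor <;> omega
    have h2 : ∑ i, accs γ (A i) (B i) ((t : ℤ) - γ) = 0 := by
      rcases Nat.eq_zero_or_pos t with h0 | h0
      · subst h0
        have hz : ∀ i : I, accs γ (A i) (B i) (-(γ : ℤ)) = 0 := by
          intro i
          rw [accs, if_neg (by omega), if_neg (by omega)]
        simp only [Nat.cast_zero, zero_sub]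
        simp [hz]
      · apply hcomp
        rw [abs_lt]
        constructor <;> omega
    rw [h1, h2]
    ring
  · obtain ⟨t, hτt⟩ : ∃ t : ℕ, τ = -(t : ℤ) := ⟨(-τ).toNat, by omega⟩
    have ht : t < γ := by omega
    have ht0 : 0 < t := by omega
    have key : ∀ i, accs (2 * γ) (A' i) (B' i) τ
        = (1 + ε * (starRingEnd ℂ) δ) * accs γ (A i) (B i) (-(t : ℤ))
          + ε * accs γ (A i) (B i) ((γ : ℤ) - t) := by
      intro i
      rw [hτt]
      exact neg_decomp γ hγ ε δ (A i) (B i) (A' i) (B' i) (hA' i) (hB' i) t ht0 ht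
    rw [Finset.sum_congr rfl (fun i _ => key i), Finset.sum_add_distrib,
      ← Finset.mul_sum, ← Finset.mul_sum]
    have h1 : ∑ i, accs γ (A i) (B i) (-(t : ℤ)) = 0 := by
      apply hcomp
      rw [abs_lt]
      constructor <;> omega
    have h2 : ∑ i, accs γ (A i) (B i) ((γ : ℤ) - t) = 0 := by
      apply hcomp
      rw [abs_lt]
      constructor <;> omega
    rw [h1, h2]
    ring
end

section
/- For distinct vectors c ≠ c' in an R-element subset S_R of {0,1}^l with R even, if ∑_{α=0}^{R−1} (−1)^{∑_i (c_i + c'_i) α_i} = 0 and the shifted sum ∑_{α=0}^{R−2} (−1)^{∑_i c_i α_i + c'_i α'_i} (with (α'_0,…,α'_{l−1}) the binary digits of α+1) also appears, then the zero-shift set-cross-correlation between the codes Ω_n^c and Ω_{n'}^{c'} built from a common CCC vanishes: Θ(Ω_n^c, Ω_{n'}^{c'})(0) = Θ(ψ_γ(S_n), ψ_γ(S_{n'}))(0) · ∑_{α=0}^{R−1} (−1)^{∑_i (c_i − c'_i)α_i}. -/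
open Complex BigOperators Finset

/-- `(-1)^(c ⬝ b(r))` where `b(r)` is the binary digit vector of `r`. -/
def sgn {l : ℕ} (c : Fin l → Bool) (r : ℕ) : ℂ :=
  ∏ i : Fin l, if c i && r.testBit i then -1 else 1

lemma conj_sgn {l : ℕ} (c : Fin l → Bool) (r : ℕ) :
    (starRingEnd ℂ) (sgn c r) = sgn c r := by
  unfold sgn
  rw [map_prod]
  refine Finset.prod_congr rfl fun i _ => ?_
  split <;> simp

lemma sum_range_mul' (γ R : ℕ) (f : ℕ → ℂ) :
    ∑ t ∈ Finset.range (R * γ), f t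
      = ∑ α ∈ Finset.range R, ∑ j ∈ Finset.range γ, f (γ * α + j) := by
  induction R with
  | zero => simp
  | succ m ih =>
    rw [Finset.sum_range_succ, ← ih, Nat.succ_mul, Finset.sum_range_add]
    congr 1
    exact Finset.sum_congr rfl fun j _ => by rw [mul_comm γ m]

theorem stmt_12 (k l γ R : ℕ) (hγ : 0 < γ) (hRe : Even R) (hR2 : 2 ≤ R)
    (hRle : R ≤ 2 ^ l)
    (S_R : Finset (Fin l → Bool)) (hS : S_R.card = R)
    (C : Fin (2 ^ k) → Fin (2 ^ (k + 1)) → ℕ → ℂ)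
    (n n' : Fin (2 ^ k)) (c c' : Fin l → Bool)
    (hc : c ∈ S_R) (hc' : c' ∈ S_R) (hne : c ≠ c')
    (Ω Ω' : Fin (2 ^ (k + 1)) → ℕ → ℂ)
    (hΩ : ∀ a t, Ω a t = sgn c (t / γ) * C n a (t % γ))
    (hΩ' : ∀ a t, Ω' a t = sgn c' (t / γ) * C n' a (t % γ)) :
    ∑ a, accs (R * γ) (Ω a) (Ω' a) 0 =
      (∑ a, accs γ (C n a) (C n' a) 0) *
        ∑ α ∈ Finset.range R, sgn c α * sgn c' α := by
  have hRγ : (0:ℤ) < ((R * γ : ℕ) : ℤ) := by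
    exact_mod_cast Nat.mul_pos (by omega) hγ
  have haccs : ∀ (L : ℕ) (u v : ℕ → ℂ), 0 < L →
      accs L u v 0 = ∑ t ∈ Finset.range L, u t * (starRingEnd ℂ) (v t) := by
    intro L u v hL
    unfold accs
    rw [if_pos ⟨le_refl 0, by exact_mod_cast hL⟩]
    simp
  have key : ∀ a, accs (R * γ) (Ω a) (Ω' a) 0
      = accs γ (C n a) (C n' a) 0 * ∑ α ∈ Finset.range R, sgn c α * sgn c' α := by
    intro a
    rw [haccs _ _ _ (Nat.mul_pos (by omega) hγ), haccs _ _ _ hγ,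
      sum_range_mul' γ R, mul_comm (∑ t ∈ Finset.range γ, C n a t * (starRingEnd ℂ) (C n' a t))]
    rw [Finset.sum_mul]
    refine Finset.sum_congr rfl fun α hα => ?_
    rw [Finset.mul_sum]
    refine Finset.sum_congr rfl fun j hj => ?_
    have hj' : j < γ := Finset.mem_range.mp hj
    have hdiv : (γ * α + j) / γ = α := by
      rw [Nat.mul_add_div hγ, Nat.div_eq_of_lt hj', Nat.add_zero]
    have hmod : (γ * α + j) % γ = j := by
      rw [Nat.mul_add_mod, Nat.mod_eq_of_lt hj']
    rw [hΩ, hΩ', hdiv, hmod, map_mul, conj_sgn]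
    ring
  rw [Finset.sum_congr rfl fun a _ => key a, ← Finset.sum_mul]
end

section
/- Let {A_i}, {B_i} (i ranging over an index set I) be unimodular length-γ sequences with ∑_{i∈I} Θ(A_i,B_i)(τ) = 0 for all |τ| < γ. For each i let A'_i and B'_i be the length-Rγ concatenations of the blocks ε_r A_i and δ_r B_i respectively (r = 0,…,R−1), where ε_r, δ_r ∈ {+1,−1}. Then for every τ with 0 ≤ |τ| < γ satisfying additionally that τ = 0 implies ∑_{r} ε_r δ_r = 0 or ∑_i Θ(A_i,B_i)(0) = 0, we have ∑_{i∈I} Θ(A'_i, B'_i)(τ) = (∑_{r=0}^{R−1} ε_r δ_r)·∑_i Θ(A_i,B_i)(τ) + (∑_{r=0}^{R−2} ε_r δ_{r+1})·∑_i Θ(A_i,B_i)(τ−γ). -/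
open Complex BigOperators Finset

lemma mySum_range_mul {M : Type*} [AddCommMonoid M] (f : ℕ → M) (n m : ℕ) :
    ∑ k ∈ Finset.range (n*m), f k = ∑ r ∈ Finset.range n, ∑ s ∈ Finset.range m, f (r*m+s) := by
  induction n with
  | zero => simp
  | succ n ih =>
    rw [Nat.succ_mul, Finset.sum_range_add, ih, Finset.sum_range_succ]

lemma blocksum_pos (γ t R' : ℕ) (ht : t < γ) (u v e d : ℕ → ℂ)
    (hd : ∀ r < R'+1, (starRingEnd ℂ) (d r) = d r) :
    ∑ k ∈ Finset.range ((R'+1)*γ - t),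
        (e (k/γ) * u (k%γ)) * (starRingEnd ℂ) (d ((k+t)/γ) * v ((k+t)%γ))
      = (∑ r ∈ Finset.range (R'+1), e r * d r) *
          (∑ s ∈ Finset.range (γ-t), u s * (starRingEnd ℂ) (v (s+t)))
        + (∑ r ∈ Finset.range R', e r * d (r+1)) *
          (∑ j ∈ Finset.range t, u (γ-t+j) * (starRingEnd ℂ) (v j)) := by
  have hγ : 0 < γ := by omega
  have hdiv : ∀ r s, s < γ → (r*γ+s)/γ = r := by
    intro r s hs
    rw [mul_comm r γ, Nat.mul_add_div hγ, Nat.div_eq_of_lt hs, Nat.add_zero]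
  have hmod : ∀ r s, s < γ → (r*γ+s)%γ = s := by
    intro r s hs
    rw [mul_comm r γ, Nat.mul_add_mod, Nat.mod_eq_of_lt hs]
  have hsplit : (R'+1)*γ - t = R'*γ + (γ - t) := by
    have h : (R'+1)*γ = R'*γ + γ := by ring
    omega
  rw [hsplit, Finset.sum_range_add, mySum_range_mul]
  have eS : ∀ r < R'+1, ∑ s ∈ Finset.range (γ-t),
      (e ((r*γ+s)/γ) * u ((r*γ+s)%γ)) *
        (starRingEnd ℂ) (d ((r*γ+s+t)/γ) * v ((r*γ+s+t)%γ))
      = (e r * d r) * ∑ s ∈ Finset.range (γ-t), u s * (starRingEnd ℂ) (v (s+t)) := by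
    intro r hr
    rw [Finset.mul_sum]
    refine Finset.sum_congr rfl fun s hs => ?_
    rw [Finset.mem_range] at hs
    have h1 : r*γ+s+t = r*γ+(s+t) := by omega
    rw [h1, hdiv r s (by omega), hmod r s (by omega),
        hdiv r (s+t) (by omega), hmod r (s+t) (by omega), map_mul, hd r hr]
    ring
  have eC : ∀ r, r < R' → ∑ x ∈ Finset.range t,
      (e ((r*γ+((γ-t)+x))/γ) * u ((r*γ+((γ-t)+x))%γ)) *
        (starRingEnd ℂ) (d ((r*γ+((γ-t)+x)+t)/γ) * v ((r*γ+((γ-t)+x)+t)%γ))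
      = (e r * d (r+1)) * ∑ j ∈ Finset.range t, u (γ-t+j) * (starRingEnd ℂ) (v j) := by
    intro r hr
    rw [Finset.mul_sum]
    refine Finset.sum_congr rfl fun x hx => ?_
    rw [Finset.mem_range] at hx
    have h2 : r*γ+((γ-t)+x)+t = (r+1)*γ+x := by
      have h : (r+1)*γ = r*γ + γ := by ring
      omega
    rw [h2, hdiv r ((γ-t)+x) (by omega), hmod r ((γ-t)+x) (by omega),
        hdiv (r+1) x (by omega), hmod (r+1) x (by omega),
        map_mul, hd (r+1) (by omega)]
    ring
  have splitγ : ∀ f : ℕ → ℂ, ∑ s ∈ Finset.range γ, f s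
      = ∑ s ∈ Finset.range (γ-t), f s + ∑ x ∈ Finset.range t, f ((γ-t)+x) := by
    intro f
    have hγt : γ - t + t = γ := by omega
    conv_lhs => rw [← hγt]
    rw [Finset.sum_range_add]
  have hmid : ∑ r ∈ Finset.range R', ∑ s ∈ Finset.range γ,
      (e ((r*γ+s)/γ) * u ((r*γ+s)%γ)) *
        (starRingEnd ℂ) (d ((r*γ+s+t)/γ) * v ((r*γ+s+t)%γ))
      = ∑ r ∈ Finset.range R',
        ((e r * d r) * (∑ s ∈ Finset.range (γ-t), u s * (starRingEnd ℂ) (v (s+t)))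
          + (e r * d (r+1)) * (∑ j ∈ Finset.range t, u (γ-t+j) * (starRingEnd ℂ) (v j))) := by
    refine Finset.sum_congr rfl fun r hr => ?_
    rw [Finset.mem_range] at hr
    rw [splitγ, eS r (by omega), eC r hr]
  rw [hmid, eS R' (by omega), Finset.sum_add_distrib, ← Finset.sum_mul, ← Finset.sum_mul,
    Finset.sum_range_succ]
  ring

lemma blocksum_neg (γ m R' : ℕ) (hm : m < γ) (u v e d : ℕ → ℂ)
    (hd : ∀ r < R'+1, (starRingEnd ℂ) (d r) = d r) :
    ∑ k ∈ Finset.range ((R'+1)*γ - m),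
        (e ((k+m)/γ) * u ((k+m)%γ)) * (starRingEnd ℂ) (d (k/γ) * v (k%γ))
      = (∑ r ∈ Finset.range (R'+1), e r * d r) *
          (∑ s ∈ Finset.range (γ-m), u (s+m) * (starRingEnd ℂ) (v s))
        + (∑ r ∈ Finset.range R', e (r+1) * d r) *
          (∑ j ∈ Finset.range m, u j * (starRingEnd ℂ) (v (γ-m+j))) := by
  have hγ : 0 < γ := by omega
  have hdiv : ∀ r s, s < γ → (r*γ+s)/γ = r := by
    intro r s hs
    rw [mul_comm r γ, Nat.mul_add_div hγ, Nat.div_eq_of_lt hs, Nat.add_zero]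
  have hmod : ∀ r s, s < γ → (r*γ+s)%γ = s := by
    intro r s hs
    rw [mul_comm r γ, Nat.mul_add_mod, Nat.mod_eq_of_lt hs]
  have hsplit : (R'+1)*γ - m = R'*γ + (γ - m) := by
    have h : (R'+1)*γ = R'*γ + γ := by ring
    omega
  rw [hsplit, Finset.sum_range_add, mySum_range_mul]
  have eS : ∀ r < R'+1, ∑ s ∈ Finset.range (γ-m),
      (e ((r*γ+s+m)/γ) * u ((r*γ+s+m)%γ)) *
        (starRingEnd ℂ) (d ((r*γ+s)/γ) * v ((r*γ+s)%γ))
      = (e r * d r) * ∑ s ∈ Finset.range (γ-m), u (s+m) * (starRingEnd ℂ) (v s) := by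
    intro r hr
    rw [Finset.mul_sum]
    refine Finset.sum_congr rfl fun s hs => ?_
    rw [Finset.mem_range] at hs
    have h1 : r*γ+s+m = r*γ+(s+m) := by omega
    rw [h1, hdiv r (s+m) (by omega), hmod r (s+m) (by omega),
        hdiv r s (by omega), hmod r s (by omega), map_mul, hd r hr]
    ring
  have eC : ∀ r, r < R' → ∑ x ∈ Finset.range m,
      (e ((r*γ+((γ-m)+x)+m)/γ) * u ((r*γ+((γ-m)+x)+m)%γ)) *
        (starRingEnd ℂ) (d ((r*γ+((γ-m)+x))/γ) * v ((r*γ+((γ-m)+x))%γ))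
      = (e (r+1) * d r) * ∑ j ∈ Finset.range m, u j * (starRingEnd ℂ) (v (γ-m+j)) := by
    intro r hr
    rw [Finset.mul_sum]
    refine Finset.sum_congr rfl fun x hx => ?_
    rw [Finset.mem_range] at hx
    have h2 : r*γ+((γ-m)+x)+m = (r+1)*γ+x := by
      have h : (r+1)*γ = r*γ + γ := by ring
      omega
    rw [h2, hdiv (r+1) x (by omega), hmod (r+1) x (by omega),
        hdiv r ((γ-m)+x) (by omega), hmod r ((γ-m)+x) (by omega),
        map_mul, hd r (by omega)]
    ring
  have splitγ : ∀ f : ℕ → ℂ, ∑ s ∈ Finset.range γ, f s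
      = ∑ s ∈ Finset.range (γ-m), f s + ∑ x ∈ Finset.range m, f ((γ-m)+x) := by
    intro f
    have hγm : γ - m + m = γ := by omega
    conv_lhs => rw [← hγm]
    rw [Finset.sum_range_add]
  have hmid : ∑ r ∈ Finset.range R', ∑ s ∈ Finset.range γ,
      (e ((r*γ+s+m)/γ) * u ((r*γ+s+m)%γ)) *
        (starRingEnd ℂ) (d ((r*γ+s)/γ) * v ((r*γ+s)%γ))
      = ∑ r ∈ Finset.range R',
        ((e r * d r) * (∑ s ∈ Finset.range (γ-m), u (s+m) * (starRingEnd ℂ) (v s))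
          + (e (r+1) * d r) * (∑ j ∈ Finset.range m, u j * (starRingEnd ℂ) (v (γ-m+j)))) := by
    refine Finset.sum_congr rfl fun r hr => ?_
    rw [Finset.mem_range] at hr
    rw [splitγ, eS r (by omega), eC r hr]
  rw [hmid, eS R' (by omega), Finset.sum_add_distrib, ← Finset.sum_mul, ← Finset.sum_mul,
    Finset.sum_range_succ]
  ring

theorem stmt_17 {I : Type*} [Fintype I] (γ R : ℕ) (hγ : 0 < γ) (hR : 0 < R)
    (A B : I → ℕ → ℂ)
    (huA : ∀ i t, t < γ → ‖A i t‖ = 1) (huB : ∀ i t, t < γ → ‖B i t‖ = 1)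
    (hcomp : ∀ τ : ℤ, |τ| < (γ : ℤ) → ∑ i, accs γ (A i) (B i) τ = 0)
    (ε δ : ℕ → ℂ)
    (hε : ∀ r < R, ε r = 1 ∨ ε r = -1) (hδ : ∀ r < R, δ r = 1 ∨ δ r = -1)
    (A' B' : I → ℕ → ℂ)
    (hA' : ∀ i t, A' i t = ε (t / γ) * A i (t % γ))
    (hB' : ∀ i t, B' i t = δ (t / γ) * B i (t % γ))
    (τ : ℤ) (hτ : |τ| < (γ : ℤ))
    (h0 : τ = 0 → (∑ r ∈ Finset.range R, ε r * δ r = 0 ∨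
      ∑ i, accs γ (A i) (B i) 0 = 0)) :
    ∑ i, accs (R * γ) (A' i) (B' i) τ =
      (∑ r ∈ Finset.range R, ε r * δ r) * (∑ i, accs γ (A i) (B i) τ) +
        (∑ r ∈ Finset.range (R - 1), ε r * δ (r + 1)) *
          (∑ i, accs γ (A i) (B i) (τ - γ)) := by
  obtain ⟨R', rfl⟩ : ∃ R', R = R'+1 := ⟨R-1, by omega⟩
  simp only [Nat.add_sub_cancel]
  rw [abs_lt] at hτ
  obtain ⟨hτ1, hτ2⟩ := hτ
  have hδc : ∀ r < R'+1, (starRingEnd ℂ) (δ r) = δ r := by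
    intro r hr; rcases hδ r hr with h | h <;> simp [h]
  have hRγ : (γ:ℤ) ≤ (((R'+1)*γ : ℕ) : ℤ) := by
    exact_mod_cast Nat.le_mul_of_pos_left γ (by omega : 0 < R'+1)
  rcases le_or_gt 0 τ with hpos | hneg
  · -- case τ ≥ 0
    have ht1 : τ.toNat < γ := by omega
    have hL : ∀ i, accs ((R'+1)*γ) (A' i) (B' i) τ
        = (∑ r ∈ Finset.range (R'+1), ε r * δ r) *
            (∑ s ∈ Finset.range (γ - τ.toNat), A i s * (starRingEnd ℂ) (B i (s+τ.toNat)))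
          + (∑ r ∈ Finset.range R', ε r * δ (r+1)) *
            (∑ j ∈ Finset.range τ.toNat, A i (γ-τ.toNat+j) * (starRingEnd ℂ) (B i j)) := by
      intro i
      have hb : 0 ≤ τ ∧ τ < (((R'+1)*γ : ℕ) : ℤ) := ⟨hpos, by omega⟩
      simp only [accs]
      rw [if_pos hb]
      simp only [hA', hB']
      exact blocksum_pos γ τ.toNat R' ht1 (A i) (B i) ε δ hδc
    simp only [hL]
    rw [Finset.sum_add_distrib, ← Finset.mul_sum, ← Finset.mul_sum]
    congr 1
    · congr 1
      refine Finset.sum_congr rfl fun i _ => ?_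
      simp only [accs]
      rw [if_pos ⟨hpos, by omega⟩]
    · congr 1
      refine Finset.sum_congr rfl fun i _ => ?_
      rcases eq_or_lt_of_le hpos with h0' | h0'
      · -- τ = 0
        have ht0 : τ.toNat = 0 := by omega
        simp only [accs, ht0]
        rw [if_neg (by omega), if_neg (by omega)]
        simp
      · -- τ > 0
        simp only [accs]
        rw [if_neg (by omega), if_pos ⟨by omega, by omega⟩]
        have h1 : (-(τ-γ)).toNat = γ - τ.toNat := by omega
        have h2 : γ - (γ - τ.toNat) = τ.toNat := by omega
        rw [h1, h2]
        exact Finset.sum_congr rfl fun k _ => by rw [add_comm k (γ - τ.toNat)]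
  · -- case τ < 0
    have hm1 : 0 < (-τ).toNat := by omega
    have hm2 : (-τ).toNat < γ := by omega
    have hL : ∀ i, accs ((R'+1)*γ) (A' i) (B' i) τ
        = (∑ r ∈ Finset.range (R'+1), ε r * δ r) *
            (∑ s ∈ Finset.range (γ - (-τ).toNat),
              A i (s+(-τ).toNat) * (starRingEnd ℂ) (B i s))
          + (∑ r ∈ Finset.range R', ε (r+1) * δ r) *
            (∑ j ∈ Finset.range ((-τ).toNat),
              A i j * (starRingEnd ℂ) (B i (γ-(-τ).toNat+j))) := by
      intro i
      simp only [accs]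
      rw [if_neg (by omega), if_pos ⟨by omega, hneg⟩]
      simp only [hA', hB']
      exact blocksum_neg γ ((-τ).toNat) R' hm2 (A i) (B i) ε δ hδc
    simp only [hL]
    rw [Finset.sum_add_distrib, ← Finset.mul_sum, ← Finset.mul_sum]
    have hC : ∑ i, (∑ j ∈ Finset.range ((-τ).toNat),
        A i j * (starRingEnd ℂ) (B i (γ-(-τ).toNat+j))) = 0 := by
      have hc := hcomp ((γ:ℤ) + τ) (by rw [abs_lt]; omega)
      rw [← hc]
      refine Finset.sum_congr rfl fun i _ => ?_
      simp only [accs]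
      rw [if_pos ⟨by omega, by omega⟩]
      have h1 : ((γ:ℤ) + τ).toNat = γ - (-τ).toNat := by omega
      have h2 : γ - (γ - (-τ).toNat) = (-τ).toNat := by omega
      rw [h1, h2]
      exact Finset.sum_congr rfl fun k _ => by rw [add_comm k (γ - (-τ).toNat)]
    have hTG : ∀ i, accs γ (A i) (B i) (τ - γ) = 0 := by
      intro i
      simp only [accs]
      rw [if_neg (by omega), if_neg (by omega)]
    rw [hC, mul_zero]
    simp only [hTG]
    rw [Finset.sum_const, smul_zero, mul_zero, add_zero, add_zero]
    congr 1
    refine Finset.sum_congr rfl fun i _ => ?_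
    simp only [accs]
    rw [if_neg (by omega), if_pos ⟨hτ1, hneg⟩]
end
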